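/- Let Π be a normal non-deterministic logic program and I a total non-deterministic model of Π. Then pos(I) is a stable non-deterministic model of Π if and only if I is a fixpoint of the well-founded operator W_Π, i.e. T_Π(I) = pos(I) and U_Π(I) = neg(I). -/
import Mathlib


/-- A (negation-free) non-deterministic logic rule: a head and a finite body of
non-deterministic atoms (elements of `N := Set B`). -/
structure NDRule (B : Type*) where
  head : Set B
  body : Finset (Set B)

/-- The immediate consequence operator of a negation-free non-deterministic
logic program: the set of heads of rules all of whose body atoms belong to
`J`. -/
def ndT {B : Type*} (prog : Set (NDRule B)) (J : Set (Set B)) : Set (Set B) :=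
  {h | ∃ r ∈ prog, r.head = h ∧ ∀ b ∈ r.body, b ∈ J}

/-- The least fixpoint of the immediate consequence operator of a
negation-free non-deterministic logic program (by Knaster–Tarski, the
intersection of all prefixed points). -/
def ndLfp {B : Type*} (prog : Set (NDRule B)) : Set (Set B) :=
  ⋂₀ {J | ndT prog J ⊆ J}

/-- A normal non-deterministic logic rule: a head (an element of `N`), a finite
positive body and a finite negative body of non-deterministic atoms. -/
structure NNDRule (B : Type*) where
  head : Set B
  pos : Finset (Set B)
  neg : Finset (Set B)

/-- The non-deterministic reduct of a normal program with respect to a set `P`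
of non-deterministic atoms: the negation-free rules `head ← positive body` for
each rule none of whose negative body atoms belongs to `P`. -/
def ndReduct {B : Type*} (prog : Set (NNDRule B)) (P : Set (Set B)) : Set (NDRule B) :=
  {r' | ∃ r ∈ prog, (∀ b ∈ r.neg, b ∉ P) ∧ r' = ⟨r.head, r.pos⟩}

/-- `ξ ⊆ N` is an unfounded set of `prog` with respect to the pair
`I = (pos I, neg I)` if for every `a ∈ ξ` and every rule of `prog` with head
`a`, some positive body atom lies in `neg I`, or some negative body atom lies
in `pos I`, or some positive body atom lies in `ξ`. -/
def unfoundedSet {B : Type*} (prog : Set (NNDRule B))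
    (I : Set (Set B) × Set (Set B)) (ξ : Set (Set B)) : Prop :=
  ∀ a ∈ ξ, ∀ r ∈ prog, r.head = a →
    (∃ b ∈ r.pos, b ∈ I.2) ∨ (∃ b ∈ r.neg, b ∈ I.1) ∨ (∃ b ∈ r.pos, b ∈ ξ)

/-- The greatest unfounded set of `prog` with respect to `I`: the union of all
unfounded sets of `prog` with respect to `I`. -/
def Uop {B : Type*} (prog : Set (NNDRule B))
    (I : Set (Set B) × Set (Set B)) : Set (Set B) :=
  ⋃₀ {ξ | unfoundedSet prog I ξ}

/-- The well-founded immediate consequence operator: the set of heads of rules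
all of whose positive body atoms lie in `pos I` and all of whose negative body
atoms lie in `neg I`. -/
def Twf {B : Type*} (prog : Set (NNDRule B))
    (I : Set (Set B) × Set (Set B)) : Set (Set B) :=
  {h | ∃ r ∈ prog, r.head = h ∧ (∀ b ∈ r.pos, b ∈ I.1) ∧ ∀ b ∈ r.neg, b ∈ I.2}

/-- The well-founded operator `W_Π(I) = (T_Π(I), U_Π(I))`. -/
def Wop {B : Type*} (prog : Set (NNDRule B))
    (I : Set (Set B) × Set (Set B)) : Set (Set B) × Set (Set B) :=
  (Twf prog I, Uop prog I)

/-- A pair `I` of subsets of `N` is a total non-deterministic interpretation if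
its components are disjoint and jointly exhaust `N`. -/
def isTotalInterp {B : Type*} (I : Set (Set B) × Set (Set B)) : Prop :=
  Disjoint I.1 I.2 ∧ I.1 ∪ I.2 = Set.univ

/-- A total non-deterministic interpretation `I` is a total non-deterministic
model of `prog` if for every rule whose positive body atoms all lie in `pos I`
and whose negative body atoms all lie in `neg I`, the head lies in `pos I`. -/
def isTotalModel {B : Type*} (prog : Set (NNDRule B))
    (I : Set (Set B) × Set (Set B)) : Prop :=
  isTotalInterp I ∧
    ∀ r ∈ prog, (∀ b ∈ r.pos, b ∈ I.1) → (∀ b ∈ r.neg, b ∈ I.2) → r.head ∈ I.1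

lemma ndT_mono {B : Type*} (prog : Set (NDRule B)) {J K : Set (Set B)} (h : J ⊆ K) :
    ndT prog J ⊆ ndT prog K := by
  rintro x ⟨r, hr, hh, hb⟩
  exact ⟨r, hr, hh, fun b hb' => h (hb b hb')⟩

lemma ndLfp_le {B : Type*} (prog : Set (NDRule B)) {J : Set (Set B)}
    (h : ndT prog J ⊆ J) : ndLfp prog ⊆ J :=
  Set.sInter_subset_of_mem h

lemma ndT_lfp_le {B : Type*} (prog : Set (NDRule B)) :
    ndT prog (ndLfp prog) ⊆ ndLfp prog := by
  intro x hx
  rw [ndLfp, Set.mem_sInter]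
  intro J hJ
  exact hJ (ndT_mono prog (ndLfp_le prog hJ) hx)

lemma lfp_le_ndT {B : Type*} (prog : Set (NDRule B)) :
    ndLfp prog ⊆ ndT prog (ndLfp prog) :=
  ndLfp_le prog (ndT_mono prog (ndT_lfp_le prog))

/-- For a total non-deterministic model `I` of a normal non-deterministic logic
program, `pos I` is a stable non-deterministic model (i.e. `pos I` equals the
least fixpoint of the immediate consequence operator of the reduct with respect
to `pos I`) if and only if `I` is a fixpoint of the well-founded operator
`W_Π`, i.e. `T_Π(I) = pos I` and `U_Π(I) = neg I`. -/
theorem stable_iff_fixpoint_Wop {B : Type*} (prog : Set (NNDRule B))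
    (I : Set (Set B) × Set (Set B)) (hI : isTotalModel prog I) :
    I.1 = ndLfp (ndReduct prog I.1) ↔ (Twf prog I = I.1 ∧ Uop prog I = I.2) := by
  obtain ⟨⟨hdisj, huniv⟩, hmod⟩ := hI
  have hmem2 : ∀ x : Set B, x ∈ I.2 ↔ x ∉ I.1 := by
    intro x
    constructor
    · intro h2 h1
      exact Set.disjoint_left.mp hdisj h1 h2
    · intro h1
      have : x ∈ I.1 ∪ I.2 := huniv ▸ Set.mem_univ x
      exact this.resolve_left h1
  set R := ndReduct prog I.1 with hR
  set L := ndLfp R with hL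
  -- I.1 is a prefixed point of the reduct operator (since I is a model)
  have hpre : ndT R I.1 ⊆ I.1 := by
    rintro x ⟨r', ⟨r, hr, hneg, hr'⟩, hh, hb⟩
    subst hr'
    exact hh ▸ hmod r hr (fun b hb' => hb b hb') (fun b hb' => (hmem2 b).mpr (hneg b hb'))
  have hLsub : L ⊆ I.1 := ndLfp_le R hpre
  -- Lᶜ is an unfounded set
  have hcompl : unfoundedSet prog I Lᶜ := by
    intro a ha r hr hhead
    by_cases hneg : ∃ b ∈ r.neg, b ∈ I.1
    · exact Or.inr (Or.inl hneg)
    · push_neg at hneg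
      by_cases hpos : ∀ b ∈ r.pos, b ∈ L
      · exact absurd (ndT_lfp_le R ⟨⟨r.head, r.pos⟩, ⟨r, hr, hneg, rfl⟩, hhead, hpos⟩) ha
      · push_neg at hpos
        obtain ⟨b, hb, hbL⟩ := hpos
        exact Or.inr (Or.inr ⟨b, hb, hbL⟩)
  -- any unfounded set is disjoint from L
  have hdisjL : ∀ ξ, unfoundedSet prog I ξ → ∀ a ∈ ξ, a ∉ L := by
    intro ξ hξ
    have hstep : ndT R (L \ ξ) ⊆ L \ ξ := by
      rintro x ⟨r', ⟨r, hr, hneg, hr'⟩, hh, hb⟩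
      subst hr'
      have hxL : x ∈ L := ndT_lfp_le R ⟨⟨r.head, r.pos⟩, ⟨r, hr, hneg, rfl⟩, hh,
        fun b hb' => (hb b hb').1⟩
      refine ⟨hxL, fun hxξ => ?_⟩
      rcases hξ x hxξ r hr hh with ⟨b, hbm, hb2⟩ | ⟨b, hbm, hb1⟩ | ⟨b, hbm, hbξ⟩
      · exact (hmem2 b).mp hb2 (hLsub (hb b hbm).1)
      · exact hneg b hbm hb1
      · exact (hb b hbm).2 hbξ
    have : L ⊆ L \ ξ := ndLfp_le R hstep
    intro a ha haL
    exact (this haL).2 ha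
  -- Uop = Lᶜ
  have hU : Uop prog I = Lᶜ := by
    apply Set.Subset.antisymm
    · rintro a ⟨ξ, hξ, ha⟩
      exact hdisjL ξ hξ a ha
    · intro a ha
      exact ⟨Lᶜ, hcompl, ha⟩
  -- Twf = ndT R I.1
  have hT : Twf prog I = ndT R I.1 := by
    ext h
    constructor
    · rintro ⟨r, hr, hh, hp, hn⟩
      exact ⟨⟨r.head, r.pos⟩, ⟨r, hr, fun b hb => (hmem2 b).mp (hn b hb), rfl⟩, hh, hp⟩
    · rintro ⟨r', ⟨r, hr, hneg, hr'⟩, hh, hb⟩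
      subst hr'
      exact ⟨r, hr, hh, hb, fun b hb' => (hmem2 b).mpr (hneg b hb')⟩
  have hI2 : I.2 = I.1ᶜ := by
    ext x; exact hmem2 x
  constructor
  · intro hstable
    constructor
    · rw [hT, hstable]
      exact Set.Subset.antisymm (ndT_lfp_le R) (lfp_le_ndT R)
    · rw [hU, hI2, hstable]
  · rintro ⟨-, hU'⟩
    have : I.2 = Lᶜ := hU' ▸ hU
    rw [hI2] at this
    have := congrArg compl this
    simpa using this
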